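/- (Calibrated integral curves realize the CC distance.) Let W ⊆ U be open and let φ : W → ℝ be of class C¹ with ⟨dφ(q'), Σⱼ hⱼ Xⱼ(q')⟩ ≤ |h| for all q' ∈ W, h ∈ ℝᵐ, and Σᵢ ⟨dφ(q'), Xᵢ(q')⟩² = 1 for all q' ∈ W; set Y(q') := Σᵢ ⟨dφ(q'), Xᵢ(q')⟩ Xᵢ(q'). Suppose q ∈ W and r̄ > 0 satisfy B(q, 2r̄) ⊆ W, and let γ₀ : (−r̄/2, r̄/2) → W be an integral curve of Y with γ₀(0) = q. Then d(γ₀(s), γ₀(t)) = |t − s| for all s, t ∈ (−r̄/2, r̄/2). -/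

import Mathlib

open MeasureTheory Set
open scoped ENNReal

noncomputable section

abbrev Eu (n : ℕ) := EuclideanSpace ℝ (Fin n)

/-- `h` is a measurable control for the absolutely continuous curve `γ` on `[a,b]`. -/
def IsControlOf {n m : ℕ} (X : Fin m → Eu n → Eu n) (a b : ℝ)
    (γ : ℝ → Eu n) (h : ℝ → Eu m) : Prop :=
  AEMeasurable h (volume.restrict (Icc a b)) ∧
  IntegrableOn (fun t => ∑ j, h t j • X j (γ t)) (Icc a b) volume ∧
  ∀ t ∈ Icc a b, γ t = γ a + ∫ s in a..t, ∑ j, h s j • X j (γ s)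

/-- Length of a curve: infimum of `∫ |h|` over all measurable controls. -/
def ccLength {n m : ℕ} (X : Fin m → Eu n → Eu n) (a b : ℝ) (γ : ℝ → Eu n) : ℝ≥0∞ :=
  ⨅ (h : ℝ → Eu m) (_ : IsControlOf X a b γ h), ∫⁻ t in Icc a b, (‖h t‖₊ : ℝ≥0∞)

/-- Carnot–Carathéodory distance on `U`. -/
def ccDist {n m : ℕ} (X : Fin m → Eu n → Eu n) (U : Set (Eu n)) (p q : Eu n) : ℝ≥0∞ :=
  ⨅ (a : ℝ) (b : ℝ) (γ : ℝ → Eu n) (_ : a ≤ b) (_ : ∀ t ∈ Icc a b, γ t ∈ U)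
    (_ : γ a = p) (_ : γ b = q) (_ : ∃ h, IsControlOf X a b γ h),
    ccLength X a b γ

/-- CC ball of centre `q` and radius `r` inside `U`. -/
def ccBall {n m : ℕ} (X : Fin m → Eu n → Eu n) (U : Set (Eu n)) (q : Eu n) (r : ℝ) :
    Set (Eu n) :=
  {x ∈ U | ccDist X U q x < ENNReal.ofReal r}

/-- Diameter of a set with respect to the CC distance. -/
def ccDiam {n m : ℕ} (X : Fin m → Eu n → Eu n) (U : Set (Eu n)) (S : Set (Eu n)) : ℝ≥0∞ :=
  ⨆ (x ∈ S) (y ∈ S), ccDist X U x y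

/-- `f` is of class `C^{1,1}` on `U`: continuously differentiable with locally
Lipschitz derivative. -/
def IsC11On {n : ℕ} (f : Eu n → Eu n) (U : Set (Eu n)) : Prop :=
  ContDiffOn ℝ 1 f U ∧
  ∀ q ∈ U, ∃ (K : NNReal) (V : Set (Eu n)), V ∈ nhdsWithin q U ∧
    LipschitzOnWith K (fderiv ℝ f) V

/-!
The integral curve `γ₀` of the horizontal gradient `Y` of `φ` is an admissible curve whose control
has unit norm (because `Σᵢ ⟨dφ, Xᵢ⟩² = 1`) and along which `φ` grows at unit rate; this gives
`d(γ₀ s, γ₀ t) ≤ |t - s|`. Conversely, along an admissible curve `γ` in `W` with control `h`, the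
function `φ ∘ γ` is absolutely continuous (as `φ` is Lipschitz on the compact image of `γ`) and the
calibration inequality bounds its derivative by `|h|` almost everywhere, so
`|φ(γ b) - φ(γ a)| ≤ ∫ |h|`. A competitor from `γ₀ s` to `γ₀ t` shorter than `|t - s|` stays in
`B(q, 2r̄) ⊆ W` by the triangle inequality, hence has length at least
`|φ(γ₀ t) - φ(γ₀ s)| = |t - s|`, a contradiction.
-/

theorem setLIntegral_Icc_comp_sub_left (f : ℝ → ℝ≥0∞) (a b c : ℝ) :
    ∫⁻ u in Icc (c - b) (c - a), f (c - u) = ∫⁻ u in Icc a b, f u := by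
  rw [← preimage_const_sub_Icc]
  exact (Measure.measurePreserving_sub_left volume c).setLIntegral_comp_preimage_emb
    (Homeomorph.subLeft c).measurableEmbedding f _

theorem setLIntegral_Icc_comp_add_right (f : ℝ → ℝ≥0∞) (a b d : ℝ) :
    ∫⁻ u in Icc (a - d) (b - d), f (u + d) = ∫⁻ u in Icc a b, f u := by
  rw [← preimage_add_const_Icc]
  exact (measurePreserving_add_right volume d).setLIntegral_comp_preimage_emb
    (Homeomorph.addRight d).measurableEmbedding f _

theorem setLIntegral_Icc_ite_le (f g : ℝ → ℝ≥0∞) {a b c : ℝ} (hab : a ≤ b) (hbc : b ≤ c) :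
    ∫⁻ u in Icc a c, (if u ≤ b then f u else g u) =
      (∫⁻ u in Icc a b, f u) + ∫⁻ u in Icc b c, g u := by
  rw [← Icc_union_Ioc_eq_Icc hab hbc, lintegral_union measurableSet_Ioc
      (Set.disjoint_left.2 fun u hu hu' => not_lt.2 hu.2 hu'.1),
    setLIntegral_congr_fun measurableSet_Icc (fun u hu => if_pos hu.2),
    setLIntegral_congr_fun measurableSet_Ioc (fun u hu => if_neg (not_le.2 hu.1)),
    setLIntegral_congr Ioc_ae_eq_Icc]

theorem AbsolutelyContinuousOnInterval.of_dist_le_mul {Y Z : Type*} [PseudoMetricSpace Y]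
    [PseudoMetricSpace Z] {f : ℝ → Y} {g : ℝ → Z} {a b K : ℝ}
    (hg : AbsolutelyContinuousOnInterval g a b)
    (hfg : ∀ x ∈ uIcc a b, ∀ y ∈ uIcc a b, dist (f x) (f y) ≤ K * dist (g x) (g y)) :
    AbsolutelyContinuousOnInterval f a b := by
  unfold AbsolutelyContinuousOnInterval at hg ⊢
  refine squeeze_zero'
    (Filter.Eventually.of_forall fun _ => Finset.sum_nonneg fun _ _ => dist_nonneg) ?_
    (by simpa using hg.const_mul K)
  filter_upwards [Filter.mem_inf_of_right (Filter.mem_principal_self _)] with E hE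
  rw [Finset.mul_sum]
  exact Finset.sum_le_sum fun i hi => hfg _ (hE.1 i hi).1 _ (hE.1 i hi).2

theorem LipschitzOnWith.comp_absolutelyContinuousOnInterval {Y Z : Type*} [PseudoMetricSpace Y]
    [PseudoMetricSpace Z] {ψ : Y → Z} {γ : ℝ → Y} {K : NNReal} {s : Set Y} {a b : ℝ}
    (hψ : LipschitzOnWith K ψ s) (hγ : AbsolutelyContinuousOnInterval γ a b)
    (hγs : MapsTo γ (uIcc a b) s) : AbsolutelyContinuousOnInterval (ψ ∘ γ) a b :=
  hγ.of_dist_le_mul fun _ hx _ hy => hψ.dist_le_mul _ (hγs hx) _ (hγs hy)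

theorem ContDiffOn.exists_lipschitzOnWith_of_isCompact {E F : Type*} [NormedAddCommGroup E]
    [NormedSpace ℝ E] [NormedAddCommGroup F] [NormedSpace ℝ F] {ψ : E → F} {W K : Set E}
    (hψ : ContDiffOn ℝ 1 ψ W) (hW : IsOpen W) (hK : IsCompact K) (hKW : K ⊆ W) :
    ∃ C, LipschitzOnWith C ψ K :=
  LocallyLipschitzOn.exists_lipschitzOnWith_of_compact hK fun x hx => by
    obtain ⟨C, t, ht, hC⟩ := (hψ.contDiffAt (hW.mem_nhds (hKW hx))).exists_lipschitzOnWith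
    exact ⟨C, t, mem_nhdsWithin_of_mem_nhds ht, hC⟩

namespace IsControlOf

variable {n m : ℕ} {X : Fin m → Eu n → Eu n} {a b c : ℝ} {γ γ₁ γ₂ : ℝ → Eu n}
  {h h₁ h₂ : ℝ → Eu m}

theorem mono_right (hc : IsControlOf X a b γ h) (hcb : c ≤ b) : IsControlOf X a c γ h :=
  ⟨hc.1.mono_measure (Measure.restrict_mono (Icc_subset_Icc_right hcb) le_rfl),
    hc.2.1.mono_set (Icc_subset_Icc_right hcb), fun u hu => hc.2.2 u ⟨hu.1, hu.2.trans hcb⟩⟩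

theorem intervalIntegrable (hc : IsControlOf X a b γ h) {u v : ℝ} (hu : u ∈ Icc a b)
    (hv : v ∈ Icc a b) : IntervalIntegrable (fun t => ∑ j, h t j • X j (γ t)) volume u v :=
  (hc.2.1.mono_set (uIcc_subset_Icc hu hv)).intervalIntegrable

theorem sub_eq_integral (hc : IsControlOf X a b γ h) {u v : ℝ} (hu : u ∈ Icc a b)
    (hv : v ∈ Icc a b) : γ v - γ u = ∫ t in u..v, ∑ j, h t j • X j (γ t) := by
  have ha : a ∈ Icc a b := ⟨le_rfl, hu.1.trans hu.2⟩
  rw [hc.2.2 v hv, hc.2.2 u hu, add_sub_add_left_eq_sub,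
    intervalIntegral.integral_interval_sub_left (hc.intervalIntegrable ha hv)
      (hc.intervalIntegrable ha hu)]

theorem comp_sub_left (hc : IsControlOf X a b γ h) (d : ℝ) :
    IsControlOf X (d - b) (d - a) (fun u => γ (d - u)) (fun u => -h (d - u)) := by
  have hmp := Measure.measurePreserving_sub_left volume d
  have hemb : MeasurableEmbedding (fun u : ℝ => d - u) :=
    (Homeomorph.subLeft d).measurableEmbedding
  have hv : (fun u => ∑ j, (-h (d - u)) j • X j (γ (d - u))) =
      fun u => -∑ j, h (d - u) j • X j (γ (d - u)) := by
    ext1 u; simp [Finset.sum_neg_distrib]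
  refine ⟨?_, ?_, fun u hu => ?_⟩
  · have hmp' := hmp.restrict_preimage (measurableSet_Icc (a := a) (b := b))
    rw [preimage_const_sub_Icc] at hmp'
    exact (hc.1.comp_quasiMeasurePreserving hmp'.quasiMeasurePreserving).neg
  · have hint := (hmp.integrableOn_comp_preimage hemb).2 hc.2.1
    rw [preimage_const_sub_Icc] at hint
    exact hv ▸ hint.neg
  · have hdu : d - u ∈ Icc a b := ⟨by linarith [hu.2], by linarith [hu.1]⟩
    rw [hv, intervalIntegral.integral_neg,
      intervalIntegral.integral_comp_sub_left (fun t => ∑ j, h t j • X j (γ t)), sub_sub_cancel,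
      ← hc.sub_eq_integral hdu ⟨hdu.1.trans hdu.2, le_rfl⟩]
    simp

theorem comp_add_right (hc : IsControlOf X a b γ h) (d : ℝ) :
    IsControlOf X (a - d) (b - d) (fun u => γ (u + d)) (fun u => h (u + d)) := by
  convert (hc.comp_sub_left 0).comp_sub_left (-d) using 1 <;> simp [sub_eq_add_neg, add_comm]

theorem piecewise (hc₁ : IsControlOf X a b γ₁ h₁) (hc₂ : IsControlOf X b c γ₂ h₂)
    (hab : a ≤ b) (hbc : b ≤ c) (hγ : γ₁ b = γ₂ b) :
    IsControlOf X a c (fun u => if u ≤ b then γ₁ u else γ₂ u)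
      (fun u => if u ≤ b then h₁ u else h₂ u) := by
  set γ' : ℝ → Eu n := fun u => if u ≤ b then γ₁ u else γ₂ u
  set h' : ℝ → Eu m := fun u => if u ≤ b then h₁ u else h₂ u
  have hsplit : Icc a c = Icc a b ∪ Ioc b c := (Icc_union_Ioc_eq_Icc hab hbc).symm
  have hv₁ : EqOn (fun u => ∑ j, h' u j • X j (γ' u)) (fun u => ∑ j, h₁ u j • X j (γ₁ u))
      (Iic b) := fun u hu => by simp only [γ', h', if_pos (show u ≤ b from hu)]
  have hv₂ : EqOn (fun u => ∑ j, h' u j • X j (γ' u)) (fun u => ∑ j, h₂ u j • X j (γ₂ u))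
      (Ioi b) := fun u hu => by simp only [γ', h', if_neg (not_le.2 (show b < u from hu))]
  have hint : IntegrableOn (fun u => ∑ j, h' u j • X j (γ' u)) (Icc a c) := by
    rw [hsplit]
    exact (hc₁.2.1.congr_fun (hv₁.symm.mono fun u hu => hu.2) measurableSet_Icc).union
      ((hc₂.2.1.mono_set Ioc_subset_Icc_self).congr_fun (hv₂.symm.mono fun u hu => hu.1)
        measurableSet_Ioc)
  refine ⟨?_, hint, fun u hu => ?_⟩
  · rw [hsplit, aemeasurable_union_iff]
    exact ⟨hc₁.1.congr ((ae_restrict_mem measurableSet_Icc).mono fun u hu => (if_pos hu.2).symm),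
      (hc₂.1.mono_measure (Measure.restrict_mono Ioc_subset_Icc_self le_rfl)).congr
        ((ae_restrict_mem measurableSet_Ioc).mono fun u hu => (if_neg (not_le.2 hu.1)).symm)⟩
  have hγa : γ' a = γ₁ a := if_pos hab
  have hint' : ∀ {p q}, p ∈ Icc a c → q ∈ Icc a c →
      IntervalIntegrable (fun u => ∑ j, h' u j • X j (γ' u)) volume p q :=
    fun hp hq => (hint.mono_set (uIcc_subset_Icc hp hq)).intervalIntegrable
  have hInt₁ : ∀ {p}, p ≤ b → ∫ t in a..p, ∑ j, h' t j • X j (γ' t) =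
      ∫ t in a..p, ∑ j, h₁ t j • X j (γ₁ t) := fun hp =>
    intervalIntegral.integral_congr fun t ht => hv₁ (show t ≤ b from ht.2.trans (max_le hab hp))
  rcases le_or_gt u b with hub | hbu
  · rw [hγa, hInt₁ hub]
    simp only [γ', if_pos hub]
    exact hc₁.2.2 u ⟨hu.1, hub⟩
  · have hInt₂ : ∫ t in b..u, ∑ j, h' t j • X j (γ' t) =
        ∫ t in b..u, ∑ j, h₂ t j • X j (γ₂ t) :=
      intervalIntegral.integral_congr_ae (ae_of_all _ fun t ht =>
        hv₂ (by rw [uIoc_of_le hbu.le] at ht; exact ht.1))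
    rw [hγa, ← intervalIntegral.integral_add_adjacent_intervals
      (hint' ⟨le_rfl, hab.trans hbc⟩ ⟨hab, hbc⟩) (hint' ⟨hab, hbc⟩ hu), hInt₁ le_rfl, hInt₂,
      ← add_assoc, ← hc₁.2.2 b ⟨hab, le_rfl⟩, hγ]
    simp only [γ', if_neg (not_le.2 hbu)]
    exact hc₂.2.2 u ⟨hbu.le, hu.2⟩

theorem of_hasDerivAt (hh : ContinuousOn h (Icc a b))
    (hX : ∀ j, ContinuousOn (fun u => X j (γ u)) (Icc a b))
    (hγ : ∀ u ∈ Icc a b, HasDerivAt γ (∑ j, h u j • X j (γ u)) u) :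
    IsControlOf X a b γ h := by
  have hv : ContinuousOn (fun u => ∑ j, h u j • X j (γ u)) (Icc a b) :=
    continuousOn_finsetSum _ fun j _ =>
      ((PiLp.continuous_apply 2 _ j).comp_continuousOn hh).smul (hX j)
  refine ⟨hh.aemeasurable measurableSet_Icc, hv.integrableOn_Icc, fun u hu => ?_⟩
  rw [intervalIntegral.integral_eq_sub_of_hasDerivAt
    (fun x hx => hγ x (uIcc_subset_Icc (left_mem_Icc.2 (hu.1.trans hu.2)) hu hx))
    ((hv.mono (Icc_subset_Icc_right hu.2)).intervalIntegrable_of_Icc hu.1), add_sub_cancel]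

theorem absolutelyContinuousOnInterval (hc : IsControlOf X a b γ h) (hab : a ≤ b) :
    AbsolutelyContinuousOnInterval γ a b := by
  have hv := hc.intervalIntegrable (left_mem_Icc.2 hab) (right_mem_Icc.2 hab)
  refine (hv.norm.absolutelyContinuousOnInterval_intervalIntegral left_mem_uIcc).of_dist_le_mul
    (K := 1) fun x hx y hy => ?_
  rw [uIcc_of_le hab] at hx hy
  have ha : a ∈ Icc a b := left_mem_Icc.2 hab
  rw [one_mul, dist_eq_norm', hc.sub_eq_integral hx hy, Real.dist_eq, abs_sub_comm,
    intervalIntegral.integral_interval_sub_left (hc.intervalIntegrable ha hy).norm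
      (hc.intervalIntegrable ha hx).norm]
  exact intervalIntegral.norm_integral_le_abs_integral_norm

theorem ae_hasDerivAt (hc : IsControlOf X a b γ h) :
    ∀ᵐ u ∂volume.restrict (Icc a b), HasDerivAt γ (∑ j, h u j • X j (γ u)) u := by
  rcases lt_or_ge b a with hba | hab
  · simp [Icc_eq_empty_of_lt hba]
  have ha : a ∈ Icc a b := left_mem_Icc.2 hab
  rw [← Measure.restrict_congr_set Ioo_ae_eq_Icc]
  filter_upwards [ae_restrict_mem measurableSet_Ioo,
    ae_restrict_of_ae (hc.intervalIntegrable ha (right_mem_Icc.2 hab)).ae_hasDerivAt_integral]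
    with u hu hderiv
  refine ((hderiv (Ioo_subset_Icc_self.trans Icc_subset_uIcc hu) a left_mem_uIcc).const_add
    (γ a)).congr_of_eventuallyEq ?_
  filter_upwards [Ioo_mem_nhds hu.1 hu.2] with x hx using hc.2.2 x (Ioo_subset_Icc_self hx)

end IsControlOf

section ccDist

variable {n m : ℕ} {X : Fin m → Eu n → Eu n} {U : Set (Eu n)}

theorem ccDist_le_lintegral {a b : ℝ} {γ : ℝ → Eu n} {h : ℝ → Eu m} (hab : a ≤ b)
    (hγU : ∀ u ∈ Icc a b, γ u ∈ U) (hc : IsControlOf X a b γ h) :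
    ccDist X U (γ a) (γ b) ≤ ∫⁻ t in Icc a b, (‖h t‖₊ : ℝ≥0∞) :=
  calc ccDist X U (γ a) (γ b) ≤ ccLength X a b γ :=
        iInf₂_le_of_le a b <| iInf₂_le_of_le γ hab <| iInf₂_le_of_le hγU rfl <|
          iInf₂_le_of_le rfl ⟨h, hc⟩ le_rfl
    _ ≤ _ := iInf₂_le h hc

theorem le_ccDist {p q : Eu n} {c : ℝ≥0∞}
    (H : ∀ a b γ h, a ≤ b → (∀ u ∈ Icc a b, γ u ∈ U) → γ a = p → γ b = q →
      IsControlOf X a b γ h → c ≤ ∫⁻ t in Icc a b, (‖h t‖₊ : ℝ≥0∞)) :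
    c ≤ ccDist X U p q := by
  simp only [ccDist, ccLength, le_iInf_iff]
  exact fun a b γ hab hγU ha hb _ h hc => H a b γ h hab hγU ha hb hc

theorem ccDist_comm (p q : Eu n) : ccDist X U p q = ccDist X U q p := by
  suffices H : ∀ p q : Eu n, ccDist X U q p ≤ ccDist X U p q from le_antisymm (H q p) (H p q)
  refine fun p q => le_ccDist fun a b γ h hab hγU ha hb hc => ?_
  have hrev := ccDist_le_lintegral (by linarith) (fun u hu => hγU (0 - u)
    ⟨by linarith [hu.2], by linarith [hu.1]⟩) (hc.comp_sub_left 0)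
  simp only [sub_sub_cancel] at hrev
  rw [← ha, ← hb]
  convert hrev using 1
  simpa using (setLIntegral_Icc_comp_sub_left (fun u => (‖h u‖₊ : ℝ≥0∞)) a b 0).symm

theorem ccDist_triangle (p q r : Eu n) :
    ccDist X U p r ≤ ccDist X U p q + ccDist X U q r := by
  rw [← tsub_le_iff_right]
  refine le_ccDist fun a₁ b₁ γ₁ h₁ hab₁ hγ₁U ha₁ hb₁ hc₁ => ?_
  rw [tsub_le_iff_right, ← tsub_le_iff_left]
  refine le_ccDist fun a₂ b₂ γ₂ h₂ hab₂ hγ₂U ha₂ hb₂ hc₂ => ?_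
  rw [tsub_le_iff_left]
  have hc₂' := hc₂.comp_add_right (a₂ - b₁)
  rw [sub_sub_cancel] at hc₂'
  set c := b₂ - (a₂ - b₁)
  have hbc : b₁ ≤ c := by linarith
  have hglue := hc₁.piecewise hc₂' hab₁ hbc (by simp [hb₁, ha₂])
  have hγc : (if c ≤ b₁ then γ₁ c else γ₂ (c + (a₂ - b₁))) = r := by
    split_ifs with hcb
    · rw [le_antisymm hcb hbc, hb₁, ← ha₂, ← hb₂]; congr 1; linarith
    · rw [← hb₂]; congr 1; ring
  have hlen := ccDist_le_lintegral (hab₁.trans hbc) (fun u hu => by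
    split_ifs with hub
    · exact hγ₁U u ⟨hu.1, hub⟩
    · exact hγ₂U _ ⟨by linarith, by linarith [hu.2]⟩) hglue
  rw [if_pos hab₁, hγc, ha₁] at hlen
  refine hlen.trans (le_of_eq ?_)
  simp only [apply_ite (fun x : Eu m => (‖x‖₊ : ℝ≥0∞))]
  rw [setLIntegral_Icc_ite_le _ _ hab₁ hbc, ← setLIntegral_Icc_comp_add_right _ a₂ b₂ (a₂ - b₁),
    sub_sub_cancel]

theorem IsControlOf.mem_ccBall {a b R : ℝ} {γ : ℝ → Eu n} {h : ℝ → Eu m} {q : Eu n}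
    (hc : IsControlOf X a b γ h) (hγU : ∀ u ∈ Icc a b, γ u ∈ U)
    (hR : ccDist X U q (γ a) + ∫⁻ t in Icc a b, (‖h t‖₊ : ℝ≥0∞) < ENNReal.ofReal R) :
    ∀ u ∈ Icc a b, γ u ∈ ccBall X U q R := fun u hu => ⟨hγU u hu, by
  calc ccDist X U q (γ u) ≤ ccDist X U q (γ a) + ccDist X U (γ a) (γ u) := ccDist_triangle _ _ _
    _ ≤ ccDist X U q (γ a) + ∫⁻ t in Icc a b, (‖h t‖₊ : ℝ≥0∞) := by
        gcongr
        exact (ccDist_le_lintegral hu.1 (fun v hv => hγU v ⟨hv.1, hv.2.trans hu.2⟩)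
          (hc.mono_right hu.2)).trans (lintegral_mono_set (Icc_subset_Icc_right hu.2))
    _ < ENNReal.ofReal R := hR⟩

end ccDist

section calibration

variable {n m : ℕ} {X : Fin m → Eu n → Eu n} {W : Set (Eu n)} {ψ : Eu n → ℝ}

theorem ofReal_sub_le_lintegral_of_calibrated (hW : IsOpen W) (hψ : ContDiffOn ℝ 1 ψ W)
    (hcal : ∀ x ∈ W, ∀ g : Eu m, fderiv ℝ ψ x (∑ j, g j • X j x) ≤ ‖g‖)
    {a b : ℝ} {γ : ℝ → Eu n} {h : ℝ → Eu m} (hab : a ≤ b) (hc : IsControlOf X a b γ h)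
    (hγW : ∀ u ∈ Icc a b, γ u ∈ W) :
    ENNReal.ofReal (ψ (γ b) - ψ (γ a)) ≤ ∫⁻ u in Icc a b, (‖h u‖₊ : ℝ≥0∞) := by
  by_cases htop : ∫⁻ u in Icc a b, (‖h u‖₊ : ℝ≥0∞) = ⊤
  · simp [htop]
  have hint : IntegrableOn h (Icc a b) := ⟨hc.1.aestronglyMeasurable, lt_top_iff_ne_top.2 htop⟩
  have hnorm : IntervalIntegrable (fun u => ‖h u‖) volume a b :=
    (intervalIntegrable_iff_integrableOn_Icc_of_le hab).2 hint.norm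
  have hγ := hc.absolutelyContinuousOnInterval hab
  obtain ⟨K, hK⟩ := hψ.exists_lipschitzOnWith_of_isCompact hW
    (isCompact_Icc.image_of_continuousOn (uIcc_of_le hab ▸ hγ.continuousOn))
    (image_subset_iff.2 hγW)
  have hψγ := hK.comp_absolutelyContinuousOnInterval hγ
    (fun u hu => mem_image_of_mem γ (uIcc_of_le hab ▸ hu))
  have hderiv : deriv (ψ ∘ γ) ≤ᵐ[volume.restrict (Icc a b)] fun u => ‖h u‖ := by
    filter_upwards [ae_restrict_mem measurableSet_Icc, hc.ae_hasDerivAt] with u hu hγu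
    have hψu := (hψ.differentiableOn one_ne_zero).differentiableAt (hW.mem_nhds (hγW u hu))
    rw [(hψu.hasFDerivAt.comp_hasDerivAt u hγu).deriv]
    exact hcal _ (hγW u hu) (h u)
  calc ENNReal.ofReal (ψ (γ b) - ψ (γ a))
      = ENNReal.ofReal (∫ u in a..b, deriv (ψ ∘ γ) u) := by rw [hψγ.integral_deriv_eq_sub]; rfl
    _ ≤ ENNReal.ofReal (∫ u in a..b, ‖h u‖) := ENNReal.ofReal_le_ofReal
        (intervalIntegral.integral_mono_ae_restrict hab hψγ.intervalIntegrable_deriv hnorm hderiv)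
    _ = ∫⁻ u in Icc a b, (‖h u‖₊ : ℝ≥0∞) := by
        rw [intervalIntegral.integral_of_le hab, ← integral_Icc_eq_integral_Ioc,
          ofReal_integral_norm_eq_lintegral_enorm hint]
        rfl

theorem ofReal_abs_sub_le_lintegral_of_calibrated (hW : IsOpen W) (hψ : ContDiffOn ℝ 1 ψ W)
    (hcal : ∀ x ∈ W, ∀ g : Eu m, fderiv ℝ ψ x (∑ j, g j • X j x) ≤ ‖g‖)
    {a b : ℝ} {γ : ℝ → Eu n} {h : ℝ → Eu m} (hab : a ≤ b) (hc : IsControlOf X a b γ h)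
    (hγW : ∀ u ∈ Icc a b, γ u ∈ W) :
    ENNReal.ofReal |ψ (γ b) - ψ (γ a)| ≤ ∫⁻ u in Icc a b, (‖h u‖₊ : ℝ≥0∞) := by
  have hcal_neg : ∀ x ∈ W, ∀ g : Eu m, fderiv ℝ (-ψ) x (∑ j, g j • X j x) ≤ ‖g‖ := by
    intro x hx g
    simpa [fderiv_neg, Finset.sum_neg_distrib] using hcal x hx (-g)
  rw [abs_eq_max_neg, ENNReal.ofReal_max, neg_sub', max_le_iff]
  exact ⟨ofReal_sub_le_lintegral_of_calibrated hW hψ hcal hab hc hγW,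
    ofReal_sub_le_lintegral_of_calibrated hW hψ.neg hcal_neg hab hc hγW⟩

theorem ofReal_abs_sub_le_ccDist_of_calibrated {U : Set (Eu n)} (hW : IsOpen W)
    (hψ : ContDiffOn ℝ 1 ψ W) (hcal : ∀ x ∈ W, ∀ g : Eu m, fderiv ℝ ψ x (∑ j, g j • X j x) ≤ ‖g‖)
    {q p p' : Eu n} {R : ℝ} (hball : ccBall X U q R ⊆ W)
    (hR : ccDist X U q p + ENNReal.ofReal |ψ p' - ψ p| ≤ ENNReal.ofReal R) :
    ENNReal.ofReal |ψ p' - ψ p| ≤ ccDist X U p p' := by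
  refine le_ccDist fun a b γ h hab hγU ha hb hc => ?_
  subst ha hb
  by_contra! hshort
  have hqp : ccDist X U q (γ a) ≠ ⊤ :=
    ne_top_of_le_ne_top ENNReal.ofReal_ne_top (le_self_add.trans hR)
  have hγW : ∀ u ∈ Icc a b, γ u ∈ W := fun u hu =>
    hball <| hc.mem_ccBall hγU ((ENNReal.add_lt_add_left hqp hshort).trans_le hR) u hu
  exact hshort.not_ge (ofReal_abs_sub_le_lintegral_of_calibrated hW hψ hcal hab hc hγW)

end calibration

section horizontalGradient

variable {n m : ℕ} {X : Fin m → Eu n → Eu n} {U W : Set (Eu n)} {φ : Eu n → ℝ}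

/-- The coefficients of the horizontal gradient `Σᵢ ⟨dφ, Xᵢ⟩ Xᵢ` in the frame `X`. -/
def horizontalGradient (X : Fin m → Eu n → Eu n) (φ : Eu n → ℝ) (x : Eu n) : Eu m :=
  WithLp.toLp 2 fun i => fderiv ℝ φ x (X i x)

theorem norm_horizontalGradient (x : Eu n) :
    ‖horizontalGradient X φ x‖ = √(∑ i, (fderiv ℝ φ x (X i x)) ^ 2) := by
  simp [horizontalGradient, EuclideanSpace.norm_eq]

theorem ccDist_le_of_hasDerivAt_horizontalGradient (hWU : W ⊆ U)
    (hXc : ∀ j, ContinuousOn (X j) W) (hφ' : ContinuousOn (fderiv ℝ φ) W)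
    (hham : ∀ x ∈ W, ∑ i, (fderiv ℝ φ x (X i x)) ^ 2 = 1) {γ₀ : ℝ → Eu n} {s t : ℝ}
    (hγ₀W : ∀ u ∈ uIcc s t, γ₀ u ∈ W)
    (hγ₀ : ∀ u ∈ uIcc s t, HasDerivAt γ₀ (∑ i, horizontalGradient X φ (γ₀ u) i • X i (γ₀ u)) u) :
    ccDist X U (γ₀ s) (γ₀ t) ≤ ENNReal.ofReal |t - s| := by
  wlog hst : s ≤ t generalizing s t
  · rw [ccDist_comm, abs_sub_comm]
    exact this (uIcc_comm s t ▸ hγ₀W) (uIcc_comm s t ▸ hγ₀) (le_of_not_ge hst)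
  rw [uIcc_of_le hst] at hγ₀W hγ₀
  have hγ₀c : ContinuousOn γ₀ (Icc s t) := fun u hu => (hγ₀ u hu).continuousAt.continuousWithinAt
  have hXγ : ∀ j, ContinuousOn (fun u => X j (γ₀ u)) (Icc s t) := fun j =>
    (hXc j).comp hγ₀c hγ₀W
  have hh : ContinuousOn (fun u => horizontalGradient X φ (γ₀ u)) (Icc s t) :=
    (PiLp.continuous_toLp 2 _).comp_continuousOn <| continuousOn_pi.2 fun i =>
      (hφ'.comp hγ₀c hγ₀W).clm_apply (hXγ i)
  refine (ccDist_le_lintegral hst (fun u hu => hWU (hγ₀W u hu))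
    (IsControlOf.of_hasDerivAt hh hXγ hγ₀)).trans_eq ?_
  rw [setLIntegral_congr_fun measurableSet_Icc fun u hu => by
      rw [← enorm_eq_nnnorm, ← ofReal_norm, norm_horizontalGradient, hham _ (hγ₀W u hu),
        Real.sqrt_one, ENNReal.ofReal_one],
    setLIntegral_one, Real.volume_Icc, abs_of_nonneg (sub_nonneg.2 hst)]

theorem sub_eq_of_hasDerivAt_horizontalGradient (hW : IsOpen W) (hφ : ContDiffOn ℝ 1 φ W)
    (hham : ∀ x ∈ W, ∑ i, (fderiv ℝ φ x (X i x)) ^ 2 = 1) {γ₀ : ℝ → Eu n} {s t : ℝ}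
    (hγ₀W : ∀ u ∈ uIcc s t, γ₀ u ∈ W)
    (hγ₀ : ∀ u ∈ uIcc s t, HasDerivAt γ₀ (∑ i, horizontalGradient X φ (γ₀ u) i • X i (γ₀ u)) u) :
    φ (γ₀ t) - φ (γ₀ s) = t - s := by
  have hderiv : ∀ u ∈ uIcc s t, HasDerivAt (φ ∘ γ₀) 1 u := fun u hu => by
    have hφu := (hφ.differentiableOn one_ne_zero).differentiableAt (hW.mem_nhds (hγ₀W u hu))
    have hslope : fderiv ℝ φ (γ₀ u) (∑ i, horizontalGradient X φ (γ₀ u) i • X i (γ₀ u)) = 1 := by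
      simp [horizontalGradient, ← sq, hham _ (hγ₀W u hu)]
    exact hslope ▸ hφu.hasFDerivAt.comp_hasDerivAt u (hγ₀ u hu)
  simpa using
    (intervalIntegral.integral_eq_sub_of_hasDerivAt hderiv intervalIntegrable_const).symm

end horizontalGradient

theorem calibrated_integral_curve_realizes_ccDist_general
    (n m : ℕ)
    (U : Set (Eu n))
    (X : Fin m → Eu n → Eu n)
    (hX : ∀ j, IsC11On (X j) U)
    (W : Set (Eu n)) (hW : IsOpen W) (hWU : W ⊆ U)
    (φ : Eu n → ℝ) (hφ : ContDiffOn ℝ 1 φ W)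
    (hcal : ∀ q' ∈ W, ∀ h : Eu m, fderiv ℝ φ q' (∑ j, h j • X j q') ≤ ‖h‖)
    (hham : ∀ q' ∈ W, ∑ i, (fderiv ℝ φ q' (X i q')) ^ 2 = 1)
    (q : Eu n)
    (rbar : ℝ)
    (hball : ccBall X U q (2 * rbar) ⊆ W)
    (γ₀ : ℝ → Eu n)
    (hγ₀W : ∀ t ∈ Ioo (-(rbar / 2)) (rbar / 2), γ₀ t ∈ W)
    (hγ₀ : ∀ t ∈ Ioo (-(rbar / 2)) (rbar / 2),
      HasDerivAt γ₀ (∑ i, fderiv ℝ φ (γ₀ t) (X i (γ₀ t)) • X i (γ₀ t)) t)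
    (hγ₀0 : γ₀ 0 = q) :
    ∀ s ∈ Ioo (-(rbar / 2)) (rbar / 2), ∀ t ∈ Ioo (-(rbar / 2)) (rbar / 2),
      ccDist X U (γ₀ s) (γ₀ t) = ENNReal.ofReal |t - s| := by
  set I := Ioo (-(rbar / 2)) (rbar / 2)
  have hsub : ∀ {s t}, s ∈ I → t ∈ I → uIcc s t ⊆ I := fun hs ht =>
    ordConnected_Ioo.uIcc_subset hs ht
  have hupper : ∀ {s t}, s ∈ I → t ∈ I → ccDist X U (γ₀ s) (γ₀ t) ≤ ENNReal.ofReal |t - s| :=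
    fun hs ht => ccDist_le_of_hasDerivAt_horizontalGradient hWU
      (fun j => (hX j).1.continuousOn.mono hWU) (hφ.continuousOn_fderiv_of_isOpen hW le_rfl) hham
      (fun u hu => hγ₀W u (hsub hs ht hu)) (fun u hu => hγ₀ u (hsub hs ht hu))
  intro s hs t ht
  refine le_antisymm (hupper hs ht) ?_
  have hs' : |s| < rbar / 2 := abs_lt.2 (mem_Ioo.1 hs)
  have h0 : (0 : ℝ) ∈ I := mem_Ioo.2 ⟨by linarith [abs_nonneg s], by linarith [abs_nonneg s]⟩
  have hφγ₀ := sub_eq_of_hasDerivAt_horizontalGradient hW hφ hham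
    (fun u hu => hγ₀W u (hsub hs ht hu)) (fun u hu => hγ₀ u (hsub hs ht hu))
  rw [← hφγ₀]
  refine ofReal_abs_sub_le_ccDist_of_calibrated hW hφ hcal hball ?_
  rw [hφγ₀, ← hγ₀0]
  calc ccDist X U (γ₀ 0) (γ₀ s) + ENNReal.ofReal |t - s|
      ≤ ENNReal.ofReal |s - 0| + ENNReal.ofReal |t - s| := by gcongr; exact hupper h0 hs
    _ ≤ ENNReal.ofReal (2 * rbar) := by
        rw [← ENNReal.ofReal_add (abs_nonneg _) (abs_nonneg _), sub_zero]
        exact ENNReal.ofReal_le_ofReal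
          (by linarith [abs_lt.2 (mem_Ioo.1 ht), abs_sub t s, abs_nonneg s])

/-- **Calibrated integral curves realize the CC distance**: if `φ` is a
calibration on the open set `W ⊆ U` (i.e. `⟨dφ, Σⱼ hⱼ Xⱼ⟩ ≤ |h|` and
`Σᵢ ⟨dφ, Xᵢ⟩² = 1` on `W`), `q ∈ W`, `r̄ > 0` with `B(q, 2r̄) ⊆ W`, and
`γ₀ : (-r̄/2, r̄/2) → W` is an integral curve of
`Y = Σᵢ ⟨dφ, Xᵢ⟩ Xᵢ` with `γ₀(0) = q`, then `d(γ₀(s), γ₀(t)) = |t - s|`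
for all `s, t ∈ (-r̄/2, r̄/2)`. -/
theorem calibrated_integral_curve_realizes_ccDist
    (n m : ℕ) (hm : 1 ≤ m) (hmn : m ≤ n)
    (U : Set (Eu n)) (hU : IsOpen U)
    (X : Fin m → Eu n → Eu n)
    (hX : ∀ j, IsC11On (X j) U)
    (hindep : ∀ q ∈ U, LinearIndependent ℝ (fun j => X j q))
    (W : Set (Eu n)) (hW : IsOpen W) (hWU : W ⊆ U)
    (φ : Eu n → ℝ) (hφ : ContDiffOn ℝ 1 φ W)
    (hcal : ∀ q' ∈ W, ∀ h : Eu m, fderiv ℝ φ q' (∑ j, h j • X j q') ≤ ‖h‖)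
    (hham : ∀ q' ∈ W, ∑ i, (fderiv ℝ φ q' (X i q')) ^ 2 = 1)
    (q : Eu n) (hq : q ∈ W)
    (rbar : ℝ) (hrbar : 0 < rbar)
    (hball : ccBall X U q (2 * rbar) ⊆ W)
    (γ₀ : ℝ → Eu n)
    (hγ₀W : ∀ t ∈ Ioo (-(rbar / 2)) (rbar / 2), γ₀ t ∈ W)
    (hγ₀ : ∀ t ∈ Ioo (-(rbar / 2)) (rbar / 2),
      HasDerivAt γ₀ (∑ i, fderiv ℝ φ (γ₀ t) (X i (γ₀ t)) • X i (γ₀ t)) t)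
    (hγ₀0 : γ₀ 0 = q) :
    ∀ s ∈ Ioo (-(rbar / 2)) (rbar / 2), ∀ t ∈ Ioo (-(rbar / 2)) (rbar / 2),
      ccDist X U (γ₀ s) (γ₀ t) = ENNReal.ofReal |t - s| :=
  calibrated_integral_curve_realizes_ccDist_general n m U X hX W hW hWU φ hφ hcal hham q rbar hball
    γ₀ hγ₀W hγ₀ hγ₀0
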